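/- Let A be a positive invertible bounded operator on a complex Hilbert space H such that m·1_H ≤ 1_H ≤ A ≤ M·1_H for real scalars 0 < m ≤ 1 ≤ M, and let Φ be a unital positive linear map on B(H). Then for every p with −1 ≤ p < 0, Φ(A)^p ≥ Φ(A^p) + p·(m^(p−1) − M^(p−1))·(Φ(A) − 1_H). -/

import Mathlib

/-!
Put `B = Φ(A)`, so that `1 ≤ B ≤ M` by positivity of `Φ`. On `[1, M]` the convex function
`t ↦ t ^ p` lies below the line through `(1, 1)` with slope `p M^(p-1)`, its derivative at `M`;
applying this to `A` and then `Φ` gives `Φ(A^p) ≤ 1 + p M^(p-1) (B - 1)`. Adding the correction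
term leaves `1 + p m^(p-1) (B - 1) ≤ 1 + p (B - 1)`, since `m^(p-1) ≥ 1`, and this is below `B ^ p`
by Bernoulli's inequality for nonpositive exponents.
-/

namespace Real

lemma one_add_mul_sub_one_le_rpow_of_nonpos {t q : ℝ} (ht : 0 < t) (hq : q ≤ 0) :
    1 + q * (t - 1) ≤ t ^ q := by
  rw [rpow_def_of_pos ht]
  nlinarith [log_le_sub_one_of_pos ht, add_one_le_exp (log t * q)]

lemma rpow_le_one_add_mul_rpow_sub_one_mul_sub_one {x M q : ℝ} (hx : 1 ≤ x) (hxM : x ≤ M)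
    (hq : q ≤ 0) : x ^ q ≤ 1 + q * M ^ (q - 1) * (x - 1) := by
  have hx₀ : 0 < x := by linarith
  -- Bernoulli at `x⁻¹`: the tangent of `t ↦ t ^ q` at `x` lies below the graph at `t = 1`.
  have tangent : x ^ q - 1 ≤ q * x ^ (q - 1) * (x - 1) := by
    have h := one_add_mul_sub_one_le_rpow_of_nonpos (inv_pos.2 hx₀) hq
    have hxq : 0 < x ^ q := rpow_pos_of_pos hx₀ q
    rw [inv_rpow hx₀.le] at h
    have h' := mul_le_mul_of_nonneg_left h hxq.le
    rw [mul_inv_cancel₀ hxq.ne'] at h'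
    rw [rpow_sub_one hx₀.ne', div_eq_mul_inv]
    linear_combination h' - q * x ^ q * mul_inv_cancel₀ hx₀.ne'
  have slope : q * x ^ (q - 1) ≤ q * M ^ (q - 1) :=
    mul_le_mul_of_nonpos_left (rpow_le_rpow_of_nonpos hx₀ hxM (by linarith)) hq
  nlinarith

end Real

namespace CFC

variable {A : Type*} [CStarAlgebra A]

lemma cfc_one_add_mul_sub_one (a : A) (c : ℝ) (ha : IsSelfAdjoint a := by cfc_tac) :
    cfc (fun x : ℝ => 1 + c * (x - 1)) a = 1 + c • (a - 1) := by
  rw [cfc_add .., cfc_const_one .., cfc_const_mul .., cfc_sub .., cfc_id' .., cfc_const_one ..]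

variable [PartialOrder A] [StarOrderedRing A]

lemma spectrum_subset_Icc_of_one_le_of_le_smul_one {a : A} {M : ℝ} (h1 : 1 ≤ a)
    (hM : a ≤ M • 1) : spectrum ℝ a ⊆ Set.Icc 1 M := by
  have ha : IsSelfAdjoint a := IsSelfAdjoint.of_nonneg (zero_le_one.trans h1)
  intro x hx
  exact ⟨(algebraMap_le_iff_le_spectrum (r := (1 : ℝ)) ha).1 (by simpa using h1) x hx,
    (le_algebraMap_iff_spectrum_le ha).1 (by rwa [Algebra.algebraMap_eq_smul_one]) x hx⟩

lemma continuousOn_rpow_const_spectrum {a : A} (ha : IsStrictlyPositive a) (q : ℝ) :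
    ContinuousOn (fun x : ℝ => x ^ q) (spectrum ℝ a) :=
  continuousOn_id.rpow_const fun _ hx => Or.inl (ha.spectrum_pos hx).ne'

lemma one_add_smul_sub_one_le_rpow {a : A} (ha : IsStrictlyPositive a) {q : ℝ} (hq : q ≤ 0) :
    1 + q • (a - 1) ≤ a ^ q := by
  rw [rpow_eq_cfc_real ha.nonneg, ← cfc_one_add_mul_sub_one a q ha.isSelfAdjoint]
  exact cfc_mono (hg := continuousOn_rpow_const_spectrum ha q) fun x hx =>
    Real.one_add_mul_sub_one_le_rpow_of_nonpos (ha.spectrum_pos hx) hq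

lemma rpow_le_one_add_smul_sub_one {a : A} {M : ℝ} (h1 : 1 ≤ a) (hM : a ≤ M • 1) {q : ℝ}
    (hq : q ≤ 0) : a ^ q ≤ 1 + (q * M ^ (q - 1)) • (a - 1) := by
  have ha : IsStrictlyPositive a := isStrictlyPositive_one.of_le h1
  have hspec := spectrum_subset_Icc_of_one_le_of_le_smul_one h1 hM
  rw [rpow_eq_cfc_real ha.nonneg, ← cfc_one_add_mul_sub_one a _ ha.isSelfAdjoint]
  exact cfc_mono (hf := continuousOn_rpow_const_spectrum ha q) fun x hx =>
    Real.rpow_le_one_add_mul_rpow_sub_one_mul_sub_one (hspec hx).1 (hspec hx).2 hq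

end CFC

theorem stmt_9_general {H : Type*} [NormedAddCommGroup H] [InnerProductSpace ℂ H] [CompleteSpace H]
    (A : H →L[ℂ] H)
    (m M : ℝ) (hm : 0 < m) (hm1 : m ≤ 1)
    (hmid : (1 : H →L[ℂ] H) ≤ A)
    (hup : A ≤ M • (1 : H →L[ℂ] H))
    (Φ : (H →L[ℂ] H) →ₗ[ℂ] (H →L[ℂ] H)) (hΦ1 : Φ 1 = 1)
    (hΦpos : ∀ X : H →L[ℂ] H, 0 ≤ X → 0 ≤ Φ X)
    (p : ℝ) (hp2 : p < 0) :
    Φ (A ^ p) + (p * (m ^ (p - 1) - M ^ (p - 1))) • (Φ A - 1) ≤ Φ A ^ p := by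
  have hΦmono : Monotone Φ := OrderHomClass.mono (PositiveLinearMap.mk₀ Φ hΦpos)
  have hΦA : 1 ≤ Φ A := hΦ1 ▸ hΦmono hmid
  have hm' : 1 ≤ m ^ (p - 1) :=
    Real.one_le_rpow_of_pos_of_le_one_of_nonpos hm hm1 (by linarith)
  calc Φ (A ^ p) + (p * (m ^ (p - 1) - M ^ (p - 1))) • (Φ A - 1)
      ≤ 1 + (p * M ^ (p - 1)) • (Φ A - 1) + (p * (m ^ (p - 1) - M ^ (p - 1))) • (Φ A - 1) := by
        gcongr
        simpa [LinearMap.map_smul_of_tower, hΦ1] using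
          hΦmono (CFC.rpow_le_one_add_smul_sub_one hmid hup hp2.le)
    _ = 1 + (p * m ^ (p - 1)) • (Φ A - 1) := by module
    _ ≤ 1 + p • (Φ A - 1) := by
        gcongr
        nlinarith
    _ ≤ Φ A ^ p := CFC.one_add_smul_sub_one_le_rpow (isStrictlyPositive_one.of_le hΦA) hp2.le

/-- Corollary 2.4 (2): `Φ(A)^p ≥ Φ(A^p) + p (m^(p-1) - M^(p-1)) (Φ(A) - 1)` for `-1 ≤ p < 0`; operator powers via the continuous functional calculus. -/
theorem stmt_9 {H : Type*} [NormedAddCommGroup H] [InnerProductSpace ℂ H] [CompleteSpace H]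
    (A : H →L[ℂ] H) (hA : 0 ≤ A) (hAinv : IsUnit A)
    (m M : ℝ) (hm : 0 < m) (hm1 : m ≤ 1) (h1M : 1 ≤ M)
    (hlow : m • (1 : H →L[ℂ] H) ≤ 1)
    (hmid : (1 : H →L[ℂ] H) ≤ A)
    (hup : A ≤ M • (1 : H →L[ℂ] H))
    (Φ : (H →L[ℂ] H) →ₗ[ℂ] (H →L[ℂ] H)) (hΦ1 : Φ 1 = 1)
    (hΦpos : ∀ X : H →L[ℂ] H, 0 ≤ X → 0 ≤ Φ X)
    (p : ℝ) (hp1 : -1 ≤ p) (hp2 : p < 0) :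
    Φ (A ^ p) + (p * (m ^ (p - 1) - M ^ (p - 1))) • (Φ A - 1) ≤ Φ A ^ p :=
  stmt_9_general A m M hm hm1 hmid hup Φ hΦ1 hΦpos p hp2
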